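/- For 0 < t < 1 and z with t ≤ |z| ≤ 1 and arg z = θ > 0, the function H_t satisfies H_t(z) ≥ ((log t)²θ + |log t|θ²)/((log t − θ)² + (log t)²); in particular, for fixed t, H_t(z) ≥ |log t|/2 for all sufficiently large θ, uniformly in |z| ∈ [t,1]. -/
import Mathlib

lemma aux_mono (t : ℝ) (ht0 : 0 < t) (ht1 : t < 1) :
    ∀ r θ : ℝ, t ≤ r → r ≤ 1 → 0 < θ →
      ((Real.log t)^2 * θ + |Real.log t| * θ^2) / ((Real.log t - θ)^2 + (Real.log t)^2)
        ≤ ((Real.log t)^2 * θ + |Real.log t| * ((Real.log r)^2 + θ^2)) /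
            ((Real.log t - θ)^2 + (Real.log r)^2) := by
  intro r θ htr hr1 hθ
  have hL : Real.log t < 0 := Real.log_neg ht0 ht1
  have habs : |Real.log t| = -Real.log t := abs_of_neg hL
  have hlr : Real.log t ≤ Real.log r := Real.log_le_log ht0 htr
  have hr0 : Real.log r ≤ 0 := Real.log_nonpos (by linarith) hr1
  have ha : (Real.log r)^2 ≤ (Real.log t)^2 := by nlinarith
  have hDne : Real.log t - θ < 0 := by linarith
  have hD : 0 < (Real.log t - θ)^2 := by nlinarith
  rw [habs]
  apply div_le_div₀
  · nlinarith [sq_nonneg (Real.log t), sq_nonneg (Real.log r)]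
  · nlinarith [sq_nonneg (Real.log r)]
  · nlinarith [sq_nonneg (Real.log r)]
  · linarith

/-- For `0 < t < 1` and `z` with `t ≤ |z| = r ≤ 1` and `arg z = θ > 0`, the function
`H_t(z) = ((log t)²θ + |log t|((log r)² + θ²))/((log t − θ)² + (log r)²)` satisfies
`H_t(z) ≥ ((log t)²θ + |log t|θ²)/((log t − θ)² + (log t)²)`; in particular, for fixed `t`,
`H_t(z) ≥ |log t|/2` for all sufficiently large `θ`, uniformly in `|z| ∈ [t,1]`. -/
theorem stmt_2 (t : ℝ) (ht0 : 0 < t) (ht1 : t < 1) :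
    (∀ r θ : ℝ, t ≤ r → r ≤ 1 → 0 < θ →
      ((Real.log t)^2 * θ + |Real.log t| * θ^2) / ((Real.log t - θ)^2 + (Real.log t)^2)
        ≤ ((Real.log t)^2 * θ + |Real.log t| * ((Real.log r)^2 + θ^2)) /
            ((Real.log t - θ)^2 + (Real.log r)^2)) ∧
    (∃ Θ : ℝ, ∀ θ : ℝ, Θ ≤ θ → ∀ r : ℝ, t ≤ r → r ≤ 1 →
      |Real.log t| / 2 ≤
        ((Real.log t)^2 * θ + |Real.log t| * ((Real.log r)^2 + θ^2)) /
          ((Real.log t - θ)^2 + (Real.log r)^2)) := by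
  have hL : Real.log t < 0 := Real.log_neg ht0 ht1
  have habs : |Real.log t| = -Real.log t := abs_of_neg hL
  have hm : 0 < -Real.log t := by linarith
  refine ⟨aux_mono t ht0 ht1, ⟨2 * (-Real.log t), ?_⟩⟩
  intro θ hθ r htr hr1
  have hθ0 : 0 < θ := by linarith
  have step := aux_mono t ht0 ht1 r θ htr hr1 hθ0
  refine le_trans ?_ step
  have hD : 0 < (Real.log t - θ)^2 + (Real.log t)^2 := by nlinarith
  rw [habs, div_le_div_iff₀ (by norm_num) hD]
  nlinarith [mul_pos hm hm, sq_nonneg (θ - 2 * (-Real.log t)), mul_nonneg hm.le (sq_nonneg θ), mul_pos hm (mul_pos hm hm)]
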